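/- arXiv:1702.07473 — 3 statements merged into one kernel-verified Lean document; each statement's English description precedes it below -/
import Mathlib

section
/- Let H₁,…,H_N be complex separable Hilbert spaces and for each n let {x_j^(n)} and {y_j^(n)} be Bessel families in H_n over a common measure space (J, Σ, μ). Then the direct-sum families {x_j^(1) ⊕ ⋯ ⊕ x_j^(N)} and {y_j^(1) ⊕ ⋯ ⊕ y_j^(N)} are dual continuous frames for H₁ ⊕ ⋯ ⊕ H_N if and only if (i) for each n, {x_j^(n)} and {y_j^(n)} are dual continuous frames for H_n, and (ii) for each n₁ ≠ n₂, ∫_J ⟨h, x_j^(n₂)⟩ y_j^(n₁) dμ(j) = 0 for all h ∈ H_{n₂} (orthogonality). -/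
/-!
Testing the direct-sum reconstruction formula on vectors supported in a single coordinate
yields exactly the componentwise duality relations and the orthogonality relations. Conversely,
the Bessel bounds put every coefficient function `j ↦ ⟪a, x_j⟫` in `L²`, so by Cauchy–Schwarz each
mixed integrand `⟪a, x_j^(n)⟫ ⟪y_j^(m), b⟫` is integrable; the integral of the coordinatewise
expansion of `⟪h₁, ⊕ x_j⟫ ⟪⊕ y_j, h₂⟫` then splits into a double sum whose diagonal terms are
`⟪h₁^(n), h₂^(n)⟫` and whose off-diagonal terms vanish.
-/

open MeasureTheory
open scoped ENNReal NNReal InnerProductSpace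

namespace PiLp

variable {𝕜 ι : Type*} [RCLike 𝕜] [Fintype ι] {H : ι → Type*}
  [∀ i, NormedAddCommGroup (H i)] [∀ i, InnerProductSpace 𝕜 (H i)]

theorem inner_single_left [DecidableEq ι] (i : ι) (a : H i) (v : PiLp 2 H) :
    ⟪single 2 i a, v⟫_𝕜 = ⟪a, v i⟫_𝕜 := by
  rw [PiLp.inner_apply, Finset.sum_eq_single i (fun k _ hk => by simp [hk]) (by simp)]
  simp

theorem inner_single_right [DecidableEq ι] (i : ι) (a : H i) (v : PiLp 2 H) :
    ⟪v, single 2 i a⟫_𝕜 = ⟪v i, a⟫_𝕜 := by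
  rw [PiLp.inner_apply, Finset.sum_eq_single i (fun k _ hk => by simp [hk]) (by simp)]
  simp

theorem inner_toLp_mul_inner_toLp (f g : PiLp 2 H) (u v : ∀ i, H i) :
    ⟪f, WithLp.toLp 2 u⟫_𝕜 * ⟪WithLp.toLp 2 v, g⟫_𝕜 =
      ∑ i, ∑ k, ⟪f i, u i⟫_𝕜 * ⟪v k, g k⟫_𝕜 := by
  simp only [PiLp.inner_apply, Finset.sum_mul_sum]

end PiLp

section Bessel

variable {J : Type*} [MeasurableSpace J] {μ : Measure J}

theorem memLp_two_of_lintegral_nnnorm_sq_le {E : Type*} [NormedAddCommGroup E] {f : J → E}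
    (hf : AEStronglyMeasurable f μ) {C : ℝ≥0∞} (hC : C ≠ ∞)
    (hfC : ∫⁻ j, (‖f j‖₊ : ℝ≥0∞) ^ 2 ∂μ ≤ C) : MemLp f 2 μ := by
  refine ⟨hf, (eLpNorm_lt_top_iff_lintegral_rpow_enorm_lt_top two_ne_zero
    ENNReal.ofNat_ne_top).2 ?_⟩
  simpa [enorm_eq_nnnorm] using hfC.trans_lt hC.lt_top

variable {𝕜 E F : Type*} [RCLike 𝕜] [NormedAddCommGroup E] [InnerProductSpace 𝕜 E]
  [NormedAddCommGroup F] [InnerProductSpace 𝕜 F]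

theorem integrable_inner_mul_inner {x : J → E} {y : J → F} {a : E} {b : F}
    (hx : MemLp (fun j => ⟪a, x j⟫_𝕜) 2 μ) (hy : MemLp (fun j => ⟪b, y j⟫_𝕜) 2 μ) :
    Integrable (fun j => ⟪a, x j⟫_𝕜 * ⟪y j, b⟫_𝕜) μ := by
  have hy' : MemLp (fun j => ⟪y j, b⟫_𝕜) 2 μ := by
    simpa [Pi.star_def, RCLike.star_def, inner_conj_symm] using hy.star
  exact hx.integrable_mul hy'

end Bessel

section DirectSum

variable {𝕜 ι J : Type*} [RCLike 𝕜] [Fintype ι] {H : ι → Type*}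
  [∀ i, NormedAddCommGroup (H i)] [∀ i, InnerProductSpace 𝕜 (H i)]
  [MeasurableSpace J] {μ : Measure J} {x y : (i : ι) → J → H i}

theorem integral_inner_single_mul_inner_single [DecidableEq ι] (i k : ι) (a : H i) (b : H k) :
    ∫ j, ⟪PiLp.single 2 i a, WithLp.toLp 2 (x · j)⟫_𝕜 *
        ⟪WithLp.toLp 2 (y · j), PiLp.single 2 k b⟫_𝕜 ∂μ =
      ∫ j, ⟪a, x i j⟫_𝕜 * ⟪y k j, b⟫_𝕜 ∂μ := by
  simp only [PiLp.inner_single_left, PiLp.inner_single_right]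

theorem dual_and_orthogonal_of_directSum_dual
    (hdual : ∀ f g : PiLp 2 H, ⟪f, g⟫_𝕜 =
      ∫ j, ⟪f, WithLp.toLp 2 (x · j)⟫_𝕜 * ⟪WithLp.toLp 2 (y · j), g⟫_𝕜 ∂μ) :
    (∀ i (a b : H i), ⟪a, b⟫_𝕜 = ∫ j, ⟪a, x i j⟫_𝕜 * ⟪y i j, b⟫_𝕜 ∂μ) ∧
      ∀ i k, i ≠ k → ∀ (a : H k) (b : H i), ∫ j, ⟪a, x k j⟫_𝕜 * ⟪y i j, b⟫_𝕜 ∂μ = 0 := by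
  classical
  have hsingle : ∀ i k (a : H i) (b : H k),
      ⟪PiLp.single 2 i a, PiLp.single 2 k b⟫_𝕜 = ∫ j, ⟪a, x i j⟫_𝕜 * ⟪y k j, b⟫_𝕜 ∂μ :=
    fun i k a b => (hdual _ _).trans (integral_inner_single_mul_inner_single i k a b)
  refine ⟨fun i a b => ?_, fun i k hik a b => ?_⟩
  · rw [← hsingle, PiLp.inner_single_left, PiLp.single_eq_same]
  · rw [← hsingle, PiLp.inner_single_left, PiLp.single_eq_of_ne 2 hik.symm, inner_zero_right]

theorem directSum_dual_of_dual_of_orthogonal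
    (hint : ∀ i k (a : H i) (b : H k), Integrable (fun j => ⟪a, x i j⟫_𝕜 * ⟪y k j, b⟫_𝕜) μ)
    (hdual : ∀ i (a b : H i), ⟪a, b⟫_𝕜 = ∫ j, ⟪a, x i j⟫_𝕜 * ⟪y i j, b⟫_𝕜 ∂μ)
    (horth : ∀ i k, i ≠ k → ∀ (a : H k) (b : H i), ∫ j, ⟪a, x k j⟫_𝕜 * ⟪y i j, b⟫_𝕜 ∂μ = 0)
    (f g : PiLp 2 H) :
    ⟪f, g⟫_𝕜 = ∫ j, ⟪f, WithLp.toLp 2 (x · j)⟫_𝕜 * ⟪WithLp.toLp 2 (y · j), g⟫_𝕜 ∂μ :=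
  calc ⟪f, g⟫_𝕜 = ∑ i, ∑ k, ∫ j, ⟪f i, x i j⟫_𝕜 * ⟪y k j, g k⟫_𝕜 ∂μ := by
        classical
        refine (PiLp.inner_apply f g).trans (Finset.sum_congr rfl fun i _ => ?_)
        rw [Finset.sum_eq_single i (fun k _ hki => horth k i hki _ _) (by simp)]
        exact hdual i _ _
    _ = ∫ j, ∑ i, ∑ k, ⟪f i, x i j⟫_𝕜 * ⟪y k j, g k⟫_𝕜 ∂μ := by
        rw [integral_finsetSum _ fun i _ => integrable_finsetSum _ fun k _ => hint i k _ _]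
        exact Finset.sum_congr rfl fun i _ => (integral_finsetSum _ fun k _ => hint i k _ _).symm
    _ = _ := by simp only [PiLp.inner_toLp_mul_inner_toLp]

end DirectSum

theorem stmt_2_general {N : ℕ} {H : Fin N → Type*} [∀ n, NormedAddCommGroup (H n)]
    [∀ n, InnerProductSpace ℂ (H n)]
    {J : Type*} [MeasurableSpace J] (μ : Measure J)
    (x y : (n : Fin N) → J → H n)
    (hxmeas : ∀ (n : Fin N) (h : H n),
      AEStronglyMeasurable (fun j => (inner ℂ h (x n j) : ℂ)) μ)
    (hymeas : ∀ (n : Fin N) (h : H n),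
      AEStronglyMeasurable (fun j => (inner ℂ h (y n j) : ℂ)) μ)
    (βx βy : Fin N → ℝ)
    (hxB : ∀ (n : Fin N) (h : H n), ∫⁻ j, (‖(inner ℂ h (x n j) : ℂ)‖₊ : ℝ≥0∞) ^ 2 ∂μ ≤
      ENNReal.ofReal (βx n) * (‖h‖₊ : ℝ≥0∞) ^ 2)
    (hyB : ∀ (n : Fin N) (h : H n), ∫⁻ j, (‖(inner ℂ h (y n j) : ℂ)‖₊ : ℝ≥0∞) ^ 2 ∂μ ≤
      ENNReal.ofReal (βy n) * (‖h‖₊ : ℝ≥0∞) ^ 2) :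
    (∀ h₁ h₂ : PiLp 2 H,
        (inner ℂ h₁ h₂ : ℂ) =
          ∫ j, (inner ℂ h₁ ((WithLp.equiv 2 (∀ n, H n)).symm fun n => x n j) : ℂ) *
               (inner ℂ ((WithLp.equiv 2 (∀ n, H n)).symm fun n => y n j) h₂ : ℂ) ∂μ) ↔
      ((∀ (n : Fin N) (h₁ h₂ : H n),
          (inner ℂ h₁ h₂ : ℂ) = ∫ j, (inner ℂ h₁ (x n j) : ℂ) * (inner ℂ (y n j) h₂ : ℂ) ∂μ) ∧
        (∀ n₁ n₂ : Fin N, n₁ ≠ n₂ → ∀ (h : H n₂) (h' : H n₁),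
          ∫ j, (inner ℂ h (x n₂ j) : ℂ) * (inner ℂ (y n₁ j) h' : ℂ) ∂μ = 0)) := by
  have hint : ∀ n m (a : H n) (b : H m),
      Integrable (fun j => (inner ℂ a (x n j) : ℂ) * (inner ℂ (y m j) b : ℂ)) μ :=
    fun n m a b => integrable_inner_mul_inner
      (memLp_two_of_lintegral_nnnorm_sq_le (hxmeas n a) (by finiteness) (hxB n a))
      (memLp_two_of_lintegral_nnnorm_sq_le (hymeas m b) (by finiteness) (hyB m b))
  simp only [WithLp.equiv_symm_apply]
  exact ⟨dual_and_orthogonal_of_directSum_dual,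
    fun ⟨hdual, horth⟩ => directSum_dual_of_dual_of_orthogonal hint hdual horth⟩

/-- The direct-sum families `{⊕ₙ x j n}` and `{⊕ₙ y j n}` of Bessel families are dual
continuous frames for the Hilbert direct sum `H₁ ⊕ ⋯ ⊕ H_N` iff each pair `({x n j}, {y n j})`
is a dual frame pair for `H n` and for `n₁ ≠ n₂` the families `{x n₂ j}` and `{y n₁ j}` are
orthogonal (the weakly defined mixed operator vanishes). -/
theorem stmt_2 {N : ℕ} {H : Fin N → Type*} [∀ n, NormedAddCommGroup (H n)]
    [∀ n, InnerProductSpace ℂ (H n)] [∀ n, CompleteSpace (H n)]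
    {J : Type*} [MeasurableSpace J] (μ : Measure J)
    (x y : (n : Fin N) → J → H n)
    (hxmeas : ∀ (n : Fin N) (h : H n),
      AEStronglyMeasurable (fun j => (inner ℂ h (x n j) : ℂ)) μ)
    (hymeas : ∀ (n : Fin N) (h : H n),
      AEStronglyMeasurable (fun j => (inner ℂ h (y n j) : ℂ)) μ)
    (βx βy : Fin N → ℝ)
    (hxB : ∀ (n : Fin N) (h : H n), ∫⁻ j, (‖(inner ℂ h (x n j) : ℂ)‖₊ : ℝ≥0∞) ^ 2 ∂μ ≤
      ENNReal.ofReal (βx n) * (‖h‖₊ : ℝ≥0∞) ^ 2)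
    (hyB : ∀ (n : Fin N) (h : H n), ∫⁻ j, (‖(inner ℂ h (y n j) : ℂ)‖₊ : ℝ≥0∞) ^ 2 ∂μ ≤
      ENNReal.ofReal (βy n) * (‖h‖₊ : ℝ≥0∞) ^ 2) :
    (∀ h₁ h₂ : PiLp 2 H,
        (inner ℂ h₁ h₂ : ℂ) =
          ∫ j, (inner ℂ h₁ ((WithLp.equiv 2 (∀ n, H n)).symm fun n => x n j) : ℂ) *
               (inner ℂ ((WithLp.equiv 2 (∀ n, H n)).symm fun n => y n j) h₂ : ℂ) ∂μ) ↔
      ((∀ (n : Fin N) (h₁ h₂ : H n),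
          (inner ℂ h₁ h₂ : ℂ) = ∫ j, (inner ℂ h₁ (x n j) : ℂ) * (inner ℂ (y n j) h₂ : ℂ) ∂μ) ∧
        (∀ n₁ n₂ : Fin N, n₁ ≠ n₂ → ∀ (h : H n₂) (h' : H n₁),
          ∫ j, (inner ℂ h (x n₂ j) : ℂ) * (inner ℂ (y n₁ j) h' : ℂ) ∂μ = 0)) :=
  stmt_2_general μ x y hxmeas hymeas βx βy hxB hyB
end

section
/- Let a : ℤ → ℂ be absolutely summable coefficients indexed by a countable subgroup-union Λ of the dual group Ĝ of an LCA group G, and suppose the almost periodic series z(x) = Σ_{α∈Λ} α(x) a(α) converges absolutely and z(x) = 0 for all x ∈ G. Then a(α) = 0 for every α ∈ Λ. -/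
/-!
Dividing the series by `c β x` reduces to the case where `β` carries the trivial character and
every other index a non-trivial one. Averaging the identity over the translates `x + n • g`,
`n ≤ N`, multiplies each coefficient `a α` by the mean of `c α` over `0, g, …, N • g`; this
mean is `1` for the trivial character and tends to `0` as `N → ∞` when `c α g ≠ 1`. Composing
such averages over finitely many `g` and letting the finite set and `N` grow, dominated
convergence turns the vanishing series into `a β = 0`.
-/

open Filter Topology Finset

namespace AddChar

variable {G : Type*} [AddCommGroup G]

noncomputable def orbitMean (χ : AddChar G Circle) (g : G) (N : ℕ) : ℂ :=
  ((N : ℂ) + 1)⁻¹ * ∑ n ∈ range (N + 1), (χ (n • g) : ℂ)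

lemma norm_orbitMean_le_one (χ : AddChar G Circle) (g : G) (N : ℕ) :
    ‖orbitMean χ g N‖ ≤ 1 := by
  have hN : ‖(N : ℂ) + 1‖ = N + 1 := by norm_cast
  calc ‖orbitMean χ g N‖
      ≤ ((N : ℝ) + 1)⁻¹ * ∑ n ∈ range (N + 1), ‖(χ (n • g) : ℂ)‖ := by
        rw [orbitMean, norm_mul, norm_inv, hN]
        gcongr
        exact norm_sum_le _ _
    _ = 1 := by
        simp only [Circle.norm_coe, sum_const, card_range, nsmul_eq_mul, mul_one]
        push_cast
        exact inv_mul_cancel₀ (by positivity)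

@[simp]
lemma orbitMean_one (g : G) (N : ℕ) : orbitMean (1 : AddChar G Circle) g N = 1 := by
  simp only [orbitMean, one_apply, Circle.coe_one, sum_const, card_range, nsmul_eq_mul,
    Nat.cast_add, Nat.cast_one, mul_one]
  exact inv_mul_cancel₀ (by exact_mod_cast N.succ_ne_zero)

lemma norm_orbitMean_le {χ : AddChar G Circle} {g : G} (hχ : χ g ≠ 1) (N : ℕ) :
    ‖orbitMean χ g N‖ ≤ 2 / ‖(χ g : ℂ) - 1‖ * (1 / ((N : ℝ) + 1)) := by
  have hζ : (χ g : ℂ) ≠ 1 := fun h => hχ (Circle.coe_eq_one.mp h)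
  have hN : ‖(N : ℂ) + 1‖ = N + 1 := by norm_cast
  have hpow : ∀ n : ℕ, (χ (n • g) : ℂ) = (χ g : ℂ) ^ n := by
    intro n
    rw [map_nsmul_eq_pow, Circle.coe_pow]
  have hnum : ‖(χ g : ℂ) ^ (N + 1) - 1‖ ≤ 2 := by
    calc ‖(χ g : ℂ) ^ (N + 1) - 1‖
        ≤ ‖(χ g : ℂ) ^ (N + 1)‖ + ‖(1 : ℂ)‖ := norm_sub_le _ _
      _ = 2 := by rw [norm_pow, Circle.norm_coe]; norm_num
  rw [orbitMean, sum_congr rfl fun n _ => hpow n, geom_sum_eq hζ, norm_mul, norm_inv, hN,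
    norm_div, one_div, mul_comm]
  gcongr

lemma tendsto_orbitMean_zero {χ : AddChar G Circle} {g : G} (hχ : χ g ≠ 1) :
    Tendsto (orbitMean χ g) atTop (𝓝 0) := by
  refine squeeze_zero_norm (norm_orbitMean_le hχ) ?_
  simpa using tendsto_one_div_add_atTop_nhds_zero_nat.const_mul (2 / ‖(χ g : ℂ) - 1‖)

lemma norm_prod_orbitMean_le_one {κ : Type*} (χ : AddChar G Circle) (g : κ → G)
    (s : Finset κ) (N : ℕ) : ‖∏ i ∈ s, orbitMean χ (g i) N‖ ≤ 1 :=
  (Finset.norm_prod_le _ _).trans <|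
    prod_le_one (fun _ _ => norm_nonneg _) fun _ _ => norm_orbitMean_le_one _ _ _

lemma tendsto_prod_orbitMean_zero {κ : Type*} {χ : AddChar G Circle} (g : κ → G) {i : κ}
    (hi : χ (g i) ≠ 1) :
    Tendsto (fun p : Finset κ × ℕ => ∏ j ∈ p.1, orbitMean χ (g j) p.2) atTop (𝓝 0) := by
  classical
  have hmean : Tendsto (fun p : Finset κ × ℕ => orbitMean χ (g i) p.2) atTop (𝓝 0) := by
    rw [← prod_atTop_atTop_eq]
    exact (tendsto_orbitMean_zero hi).comp tendsto_snd
  refine squeeze_zero_norm' ?_ (by simpa using hmean.norm)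
  filter_upwards [eventually_ge_atTop ({i}, 0)] with p hp
  rw [← mul_prod_erase _ _ (hp.1 (mem_singleton_self i)), norm_mul]
  exact mul_le_of_le_one_right (norm_nonneg _) (norm_prod_orbitMean_le_one _ _ _ _)

variable {ι : Type*} (d : ι → AddChar G Circle) {b : ι → ℂ}

lemma summable_apply_mul (hb : Summable (‖b ·‖)) (x : G) :
    Summable fun α => (d α x : ℂ) * b α :=
  Summable.of_norm (by simpa [Circle.norm_coe] using hb)

lemma tsum_apply_mul_orbitMean_mul_eq_zero (hb : Summable (‖b ·‖))
    (hz : ∀ x, ∑' α, (d α x : ℂ) * b α = 0) (g : G) (N : ℕ) (x : G) :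
    ∑' α, (d α x : ℂ) * (orbitMean (d α) g N * b α) = 0 := by
  have htranslate : ∀ α, (d α x : ℂ) * (orbitMean (d α) g N * b α)
      = ((N : ℂ) + 1)⁻¹ * ∑ n ∈ range (N + 1), (d α (x + n • g) : ℂ) * b α := by
    intro α
    simp only [orbitMean, map_add_eq_mul, Circle.coe_mul, mul_sum, sum_mul]
    exact sum_congr rfl fun n _ => by ring
  rw [tsum_congr htranslate, tsum_mul_left,
    Summable.tsum_finsetSum fun n _ => summable_apply_mul d hb _]
  simp [hz]

lemma tsum_apply_mul_prod_orbitMean_mul_eq_zero {κ : Type*} (hb : Summable (‖b ·‖))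
    (hz : ∀ x, ∑' α, (d α x : ℂ) * b α = 0) (g : κ → G) (s : Finset κ) (N : ℕ)
    (x : G) :
    ∑' α, (d α x : ℂ) * ((∏ i ∈ s, orbitMean (d α) (g i) N) * b α) = 0 := by
  classical
  induction s using Finset.induction generalizing x with
  | empty => simpa using hz x
  | insert i s hi ih =>
    have hbs : Summable fun α => ‖(∏ j ∈ s, orbitMean (d α) (g j) N) * b α‖ := by
      refine Summable.of_nonneg_of_le (fun _ => norm_nonneg _) (fun α => ?_) hb
      rw [norm_mul]
      exact mul_le_of_le_one_left (norm_nonneg _) (norm_prod_orbitMean_le_one _ _ _ _)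
    simp_rw [prod_insert hi, mul_assoc]
    exact tsum_apply_mul_orbitMean_mul_eq_zero d hbs ih (g i) N x

lemma eq_zero_of_forall_tsum_apply_mul_eq_zero (hb : Summable (‖b ·‖))
    (hz : ∀ x, ∑' α, (d α x : ℂ) * b α = 0) {β : ι} (hβ : d β = 1)
    (hne : ∀ α, α ≠ β → d α ≠ 1) : b β = 0 := by
  classical
  choose! g hg using fun α (h : α ≠ β) => ne_one_iff.mp (hne α h)
  set M : Finset ι × ℕ → ι → ℂ := fun p α => ∏ γ ∈ p.1, orbitMean (d α) (g γ) p.2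
  have hvanish : ∀ p, ∑' α, M p α * b α = 0 := fun p => by
    simpa using tsum_apply_mul_prod_orbitMean_mul_eq_zero d hb hz g p.1 p.2 0
  have hlim : Tendsto (fun p => ∑' α, M p α * b α) atTop
      (𝓝 (∑' α, (Pi.single β (b β) : ι → ℂ) α)) := by
    refine tendsto_tsum_of_dominated_convergence hb (fun α => ?_) (.of_forall fun p α => ?_)
    · rcases eq_or_ne α β with rfl | h
      · simp [M, hβ]
      · simpa [Pi.single_apply, h] using
          (tendsto_prod_orbitMean_zero g (hg α h)).mul_const (b α)
    · rw [norm_mul]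
      exact mul_le_of_le_one_left (norm_nonneg _) (norm_prod_orbitMean_le_one _ _ _ _)
  simp only [hvanish, tsum_pi_single] at hlim
  exact tendsto_nhds_unique hlim tendsto_const_nhds

end AddChar

theorem stmt_13_general {G : Type*} [AddCommGroup G]
    {Λ : Type*}
    (c : Λ → AddChar G Circle) (hc : Function.Injective c)
    (a : Λ → ℂ) (ha : Summable fun α => ‖a α‖)
    (hz : ∀ x : G, ∑' α, ((c α x : ℂ) * a α) = 0) :
    ∀ α, a α = 0 := by
  intro β
  refine AddChar.eq_zero_of_forall_tsum_apply_mul_eq_zero (fun α => c α / c β) ha (fun x => ?_)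
    (div_self' (c β)) fun α hα h => hα (hc (div_eq_one.mp h))
  have htwist : ∀ α,
      (((c α / c β) x : Circle) : ℂ) * a α = (c β x : ℂ)⁻¹ * ((c α x : ℂ) * a α) := by
    intro α
    rw [AddChar.div_apply', Circle.coe_div]
    ring
  rw [tsum_congr htwist, tsum_mul_left, hz x, mul_zero]

/-- Uniqueness theorem for generalized (almost periodic) Fourier series: if `{c α}` is a
countable family of distinct (unitary circle-valued) characters of an abelian group `G`,
`a` is absolutely summable, and the almost periodic series `∑ α, (c α x) * a α` vanishes
for every `x ∈ G`, then all coefficients `a α` vanish. -/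
theorem stmt_13 {G : Type*} [AddCommGroup G]
    {Λ : Type*} [Countable Λ]
    (c : Λ → AddChar G Circle) (hc : Function.Injective c)
    (a : Λ → ℂ) (ha : Summable fun α => ‖a α‖)
    (hz : ∀ x : G, ∑' α, ((c α x : ℂ) * a α) = 0) :
    ∀ α, a α = 0 :=
  stmt_13_general c hc a ha hz
end

section
/- Let {x_j^(n)}_{j∈J}, 1 ≤ n ≤ N, be Bessel families in Hilbert spaces H_n over a common measure space (J, Σ, μ). The direct-sum family {⊕_{n=1}^N x_j^(n)} is a Parseval continuous frame for H₁ ⊕ ⋯ ⊕ H_N if and only if (i) each {x_j^(n)} is a Parseval continuous frame for H_n, and (ii) for each n₁ ≠ n₂, the families {x_j^(n₁)} and {x_j^(n₂)} are orthogonal, i.e., ∫_J ⟨h, x_j^(n₂)⟩ x_j^(n₁) dμ(j) = 0 for all h ∈ H_{n₂}. -/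
/-!
The frame coefficients of `{x_j^(n)}` define an analysis operator `T_n : H_n → L²(μ)` (the
Bessel bound puts the coefficients in `L²`), and the analysis operator of the direct-sum family
is `h ↦ ∑ₙ T_n hₙ`. A family is Parseval exactly when its analysis operator is an isometry, and
`h ↦ ∑ₙ T_n hₙ` is an isometry of the `ℓ²`-direct sum exactly when every `T_n` is one and the
`T_n` have pairwise orthogonal ranges: by polarization both sides are identities between inner
products, and these may be tested on vectors supported in a single coordinate.
-/

open MeasureTheory
open scoped ENNReal InnerProductSpace

theorem PiLp.inner_single_left_s19 {𝕜 ι : Type*} [RCLike 𝕜] [Fintype ι] [DecidableEq ι]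
    {E : ι → Type*} [∀ i, NormedAddCommGroup (E i)] [∀ i, InnerProductSpace 𝕜 (E i)]
    (i : ι) (v : E i) (h : PiLp 2 E) :
    ⟪PiLp.single 2 i v, h⟫_𝕜 = ⟪v, h i⟫_𝕜 := by
  rw [PiLp.inner_apply, Finset.sum_eq_single i (fun j _ hj => by simp [Pi.single_eq_of_ne hj])
    (by simp)]
  simp

theorem forall_norm_sum_apply_eq_norm_iff {𝕜 ι F : Type*} [RCLike 𝕜] [Fintype ι]
    {E : ι → Type*} [∀ i, NormedAddCommGroup (E i)] [∀ i, InnerProductSpace 𝕜 (E i)]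
    [NormedAddCommGroup F] [InnerProductSpace 𝕜 F] (T : ∀ i, E i →ₗ[𝕜] F) :
    (∀ h : PiLp 2 E, ‖∑ i, T i (h i)‖ = ‖h‖) ↔
      (∀ i v, ‖T i v‖ = ‖v‖) ∧ Pairwise fun i j => ∀ v w, ⟪T i v, T j w⟫_𝕜 = 0 := by
  classical
  let S : PiLp 2 E →ₗ[𝕜] F := ∑ i, (T i).comp (PiLp.proj 2 E i).toLinearMap
  have hS : ∀ h, S h = ∑ i, T i (h i) := fun h => by simp [S]
  have hS_single : ∀ i v, S (PiLp.single 2 i v) = T i v := fun i v => by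
    rw [hS, Finset.sum_eq_single i (fun j _ hj => by simp [Pi.single_eq_of_ne hj]) (by simp)]
    simp
  simp only [← hS, LinearMap.norm_map_iff_inner_map_map]
  constructor
  · intro hS_inner
    refine ⟨fun i v w => ?_, fun i j hij v w => ?_⟩
    · simpa [hS_single, PiLp.inner_single_left_s19] using
        hS_inner (PiLp.single 2 i v) (PiLp.single 2 i w)
    · simpa [hS_single, PiLp.inner_single_left_s19, Pi.single_eq_of_ne hij] using
        hS_inner (PiLp.single 2 i v) (PiLp.single 2 j w)
  · rintro ⟨hT, hT_orth⟩ h h'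
    have : OrthogonalFamily 𝕜 E fun i => (T i).isometryOfInner (hT i) := hT_orth
    simpa only [hS, PiLp.inner_apply, LinearMap.coe_isometryOfInner] using
      this.inner_sum h h' Finset.univ

namespace MeasureTheory

theorem memLp_two_of_lintegral_sq_ne_top {α F : Type*} {m : MeasurableSpace α} {μ : Measure α}
    [NormedAddCommGroup F] {f : α → F} (hf : AEStronglyMeasurable f μ)
    (h : ∫⁻ a, ‖f a‖ₑ ^ 2 ∂μ ≠ ∞) : MemLp f 2 μ := by
  refine ⟨hf, (eLpNorm_lt_top_iff_lintegral_rpow_enorm_lt_top two_ne_zero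
    ENNReal.ofNat_ne_top).2 ?_⟩
  simpa using h.lt_top

theorem L2.norm_sq_eq_integral_norm_sq {α 𝕜 : Type*} {m : MeasurableSpace α} {μ : Measure α}
    [RCLike 𝕜] (f : Lp 𝕜 2 μ) : ‖f‖ ^ 2 = ∫ a, ‖f a‖ ^ 2 ∂μ := by
  rw [← inner_self_eq_norm_sq (𝕜 := 𝕜), L2.inner_def, ← integral_re (L2.integrable_inner f f)]
  simp_rw [inner_self_eq_norm_sq]

end MeasureTheory

section AnalysisOperator

variable {𝕜 J E E' : Type*} [RCLike 𝕜] [MeasurableSpace J] {μ : Measure J}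
  [NormedAddCommGroup E] [InnerProductSpace 𝕜 E] [NormedAddCommGroup E'] [InnerProductSpace 𝕜 E']

theorem memLp_inner_of_bessel {y : J → E} {h : E} {β : ℝ}
    (hmeas : AEStronglyMeasurable (fun j => ⟪h, y j⟫_𝕜) μ)
    (hB : ∫⁻ j, (‖⟪h, y j⟫_𝕜‖₊ : ℝ≥0∞) ^ 2 ∂μ ≤ ENNReal.ofReal β * (‖h‖₊ : ℝ≥0∞) ^ 2) :
    MemLp (fun j => ⟪y j, h⟫_𝕜) 2 μ := by
  have hL2 := memLp_two_of_lintegral_sq_ne_top hmeas (hB.trans_lt (by finiteness)).ne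
  simpa [Pi.star_def, RCLike.star_def, inner_conj_symm] using hL2.star

/-- Mathlib's inner product is conjugate-linear in its first argument, so `⟪y j, h⟫` is the
frame coefficient `⟨h, y_j⟩` of the paper, linear in `h`. -/
noncomputable def analysisOperator (y : J → E) (hy : ∀ h, MemLp (fun j => ⟪y j, h⟫_𝕜) 2 μ) :
    E →ₗ[𝕜] Lp 𝕜 2 μ where
  toFun h := (hy h).toLp
  map_add' h h' := by
    refine Lp.ext ?_
    filter_upwards [(hy (h + h')).coeFn_toLp, Lp.coeFn_add ((hy h).toLp _) ((hy h').toLp _),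
      (hy h).coeFn_toLp, (hy h').coeFn_toLp] with j h₁ h₂ h₃ h₄
    rw [h₁, h₂, Pi.add_apply, h₃, h₄, inner_add_right]
  map_smul' c h := by
    refine Lp.ext ?_
    filter_upwards [(hy (c • h)).coeFn_toLp, Lp.coeFn_smul c ((hy h).toLp _),
      (hy h).coeFn_toLp] with j h₁ h₂ h₃
    rw [RingHom.id_apply, h₁, h₂, Pi.smul_apply, h₃, inner_smul_right, smul_eq_mul]

variable (y : J → E) (hy : ∀ h, MemLp (fun j => ⟪y j, h⟫_𝕜) 2 μ)

theorem coeFn_analysisOperator (h : E) :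
    analysisOperator y hy h =ᵐ[μ] fun j => ⟪y j, h⟫_𝕜 :=
  (hy h).coeFn_toLp

theorem inner_analysisOperator (y' : J → E') (hy' : ∀ h, MemLp (fun j => ⟪y' j, h⟫_𝕜) 2 μ)
    (h : E) (h' : E') :
    ⟪analysisOperator y hy h, analysisOperator y' hy' h'⟫_𝕜 =
      ∫ j, ⟪h, y j⟫_𝕜 * ⟪y' j, h'⟫_𝕜 ∂μ := by
  rw [L2.inner_def]
  refine integral_congr_ae ?_
  filter_upwards [coeFn_analysisOperator y hy h, coeFn_analysisOperator y' hy' h'] with j h₁ h₂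
  rw [h₁, h₂, RCLike.inner_apply', inner_conj_symm]

theorem norm_sq_analysisOperator (h : E) :
    ‖analysisOperator y hy h‖ ^ 2 = ∫ j, ‖⟪h, y j⟫_𝕜‖ ^ 2 ∂μ := by
  rw [L2.norm_sq_eq_integral_norm_sq]
  refine integral_congr_ae ?_
  filter_upwards [coeFn_analysisOperator y hy h] with j hj
  rw [hj, norm_inner_symm]

theorem norm_sq_sum_analysisOperator {ι : Type*} [Fintype ι] {E : ι → Type*}
    [∀ i, NormedAddCommGroup (E i)] [∀ i, InnerProductSpace 𝕜 (E i)] (x : ∀ i, J → E i)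
    (hx : ∀ i h, MemLp (fun j => ⟪x i j, h⟫_𝕜) 2 μ) (h : PiLp 2 E) :
    ‖∑ i, analysisOperator (x i) (hx i) (h i)‖ ^ 2 =
      ∫ j, ‖⟪h, WithLp.toLp 2 fun i => x i j⟫_𝕜‖ ^ 2 ∂μ := by
  rw [L2.norm_sq_eq_integral_norm_sq]
  refine integral_congr_ae ?_
  filter_upwards [Lp.coeFn_fun_finsetSum Finset.univ fun i => analysisOperator (x i) (hx i) (h i),
    ae_all_iff.2 fun i => coeFn_analysisOperator (x i) (hx i) (h i)] with j h₁ h₂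
  rw [h₁, norm_inner_symm, PiLp.inner_apply]
  simp [h₂]

end AnalysisOperator

theorem stmt_19_general {N : ℕ} {H : Fin N → Type*} [∀ n, NormedAddCommGroup (H n)]
    [∀ n, InnerProductSpace ℂ (H n)]
    {J : Type*} [MeasurableSpace J] (μ : Measure J)
    (x : (n : Fin N) → J → H n)
    (hxmeas : ∀ (n : Fin N) (h : H n),
      AEStronglyMeasurable (fun j => (inner ℂ h (x n j) : ℂ)) μ)
    (β : Fin N → ℝ)
    (hB : ∀ (n : Fin N) (h : H n), ∫⁻ j, (‖(inner ℂ h (x n j) : ℂ)‖₊ : ℝ≥0∞) ^ 2 ∂μ ≤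
      ENNReal.ofReal (β n) * (‖h‖₊ : ℝ≥0∞) ^ 2) :
    (∀ h : PiLp 2 H,
        ∫ j, ‖(inner ℂ h ((WithLp.equiv 2 (∀ n, H n)).symm fun n => x n j) : ℂ)‖ ^ 2 ∂μ =
          ‖h‖ ^ 2) ↔
      ((∀ (n : Fin N) (h : H n), ∫ j, ‖(inner ℂ h (x n j) : ℂ)‖ ^ 2 ∂μ = ‖h‖ ^ 2) ∧
        (∀ n₁ n₂ : Fin N, n₁ ≠ n₂ → ∀ (h : H n₂) (h' : H n₁),
          ∫ j, (inner ℂ h (x n₂ j) : ℂ) * (inner ℂ (x n₁ j) h' : ℂ) ∂μ = 0)) := by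
  have hx : ∀ n h, MemLp (fun j => ⟪x n j, h⟫_ℂ) 2 μ := fun n h =>
    memLp_inner_of_bessel (hxmeas n h) (hB n h)
  have hsum (h : PiLp 2 H) := (norm_sq_sum_analysisOperator x hx h).symm
  have hnorm (n : Fin N) (h : H n) := (norm_sq_analysisOperator (x n) (hx n) h).symm
  have hinner (n₁ n₂ : Fin N) (h : H n₂) (h' : H n₁) :=
    (inner_analysisOperator (x n₂) (hx n₂) (x n₁) (hx n₁) h h').symm
  simp only [WithLp.equiv_symm_apply, hsum, hnorm, hinner,
    sq_eq_sq₀ (norm_nonneg _) (norm_nonneg _), forall_norm_sum_apply_eq_norm_iff]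
  exact and_congr_right' ⟨fun h n₁ n₂ hne => h hne.symm, fun h n₁ n₂ hne => h n₂ n₁ hne.symm⟩

/-- The direct-sum family `{⊕ₙ x n j}` of Bessel families is a Parseval continuous frame
for the Hilbert direct sum `H₁ ⊕ ⋯ ⊕ H_N` if and only if each `{x n j}` is a Parseval
continuous frame for `H n` and for all `n₁ ≠ n₂` the families `{x n₂ j}` and `{x n₁ j}`
are orthogonal (the weakly defined mixed dual Gramian vanishes). -/
theorem stmt_19 {N : ℕ} {H : Fin N → Type*} [∀ n, NormedAddCommGroup (H n)]
    [∀ n, InnerProductSpace ℂ (H n)] [∀ n, CompleteSpace (H n)]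
    {J : Type*} [MeasurableSpace J] (μ : Measure J)
    (x : (n : Fin N) → J → H n)
    (hxmeas : ∀ (n : Fin N) (h : H n),
      AEStronglyMeasurable (fun j => (inner ℂ h (x n j) : ℂ)) μ)
    (β : Fin N → ℝ)
    (hB : ∀ (n : Fin N) (h : H n), ∫⁻ j, (‖(inner ℂ h (x n j) : ℂ)‖₊ : ℝ≥0∞) ^ 2 ∂μ ≤
      ENNReal.ofReal (β n) * (‖h‖₊ : ℝ≥0∞) ^ 2) :
    (∀ h : PiLp 2 H,
        ∫ j, ‖(inner ℂ h ((WithLp.equiv 2 (∀ n, H n)).symm fun n => x n j) : ℂ)‖ ^ 2 ∂μ =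
          ‖h‖ ^ 2) ↔
      ((∀ (n : Fin N) (h : H n), ∫ j, ‖(inner ℂ h (x n j) : ℂ)‖ ^ 2 ∂μ = ‖h‖ ^ 2) ∧
        (∀ n₁ n₂ : Fin N, n₁ ≠ n₂ → ∀ (h : H n₂) (h' : H n₁),
          ∫ j, (inner ℂ h (x n₂ j) : ℂ) * (inner ℂ (x n₁ j) h' : ℂ) ∂μ = 0)) :=
  stmt_19_general μ x hxmeas β hB
end
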